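/- Let ξ^k, ξ̃^k ∈ ℝ^{(p+1)m}, let α be a real number, and set ξ^{k+1} = ξ^k − αℳ(ξ^k − ξ̃^k). Then (1/2)(‖ξ^k − ξ̃^k‖²_ℋ − ‖ξ^{k+1} − ξ̃^k‖²_ℋ) = (α(2 − α)/2)‖ξ^k − ξ̃^k‖²_𝒟. -/
import Mathlib


open Matrix
open scoped Kronecker

noncomputable section

/-- `Q₀ = [β I_p, e_p; −e_pᵀ, 1/β]`. -/
def Q0 (p : ℕ) (β : ℝ) : Matrix (Fin p ⊕ Unit) (Fin p ⊕ Unit) ℝ :=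
  Matrix.fromBlocks (β • (1 : Matrix (Fin p) (Fin p) ℝ))
    (Matrix.of fun _ _ => (1 : ℝ))
    (Matrix.of fun _ _ => (-1 : ℝ))
    (Matrix.of fun _ _ => 1 / β)

/-- `D₀ = diag(β, …, β, 1/β)`. -/
def D0 (p : ℕ) (β : ℝ) : Matrix (Fin p ⊕ Unit) (Fin p ⊕ Unit) ℝ :=
  Matrix.fromBlocks (β • (1 : Matrix (Fin p) (Fin p) ℝ)) 0 0
    (Matrix.of fun _ _ => 1 / β)

/-- `M₀ = I_{p+1} − (1/(p+1))·[e_p e_pᵀ, −(1/β)e_p; β e_pᵀ, p]`. -/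
def M0 (p : ℕ) (β : ℝ) : Matrix (Fin p ⊕ Unit) (Fin p ⊕ Unit) ℝ :=
  1 - (1 / (p + 1 : ℝ)) •
    Matrix.fromBlocks (Matrix.of fun _ _ => (1 : ℝ))
      (Matrix.of fun _ _ => -(1 / β))
      (Matrix.of fun _ _ => (β : ℝ))
      (Matrix.of fun _ _ => (p : ℝ))

/-- `H₀ = [β(I_p + e_p e_pᵀ), 0; 0, (p+1)/β]`. -/
def H0 (p : ℕ) (β : ℝ) : Matrix (Fin p ⊕ Unit) (Fin p ⊕ Unit) ℝ :=
  Matrix.fromBlocks (β • ((1 : Matrix (Fin p) (Fin p) ℝ) + Matrix.of fun _ _ => (1 : ℝ))) 0 0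
    (Matrix.of fun _ _ => (p + 1 : ℝ) / β)

/-- `𝒬 = Q₀ ⊗ I_m`. -/
def calQ (p m : ℕ) (β : ℝ) : Matrix ((Fin p ⊕ Unit) × Fin m) ((Fin p ⊕ Unit) × Fin m) ℝ :=
  Q0 p β ⊗ₖ (1 : Matrix (Fin m) (Fin m) ℝ)

/-- `𝒟 = D₀ ⊗ I_m`. -/
def calD (p m : ℕ) (β : ℝ) : Matrix ((Fin p ⊕ Unit) × Fin m) ((Fin p ⊕ Unit) × Fin m) ℝ :=
  D0 p β ⊗ₖ (1 : Matrix (Fin m) (Fin m) ℝ)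

/-- `ℳ = M₀ ⊗ I_m`. -/
def calM (p m : ℕ) (β : ℝ) : Matrix ((Fin p ⊕ Unit) × Fin m) ((Fin p ⊕ Unit) × Fin m) ℝ :=
  M0 p β ⊗ₖ (1 : Matrix (Fin m) (Fin m) ℝ)

/-- `ℋ = H₀ ⊗ I_m`. -/
def calH (p m : ℕ) (β : ℝ) : Matrix ((Fin p ⊕ Unit) × Fin m) ((Fin p ⊕ Unit) × Fin m) ℝ :=
  H0 p β ⊗ₖ (1 : Matrix (Fin m) (Fin m) ℝ)

/-- `‖v‖²_G = vᵀ G v`. -/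
def nsq {p m : ℕ} (G : Matrix ((Fin p ⊕ Unit) × Fin m) ((Fin p ⊕ Unit) × Fin m) ℝ)
    (v : (Fin p ⊕ Unit) × Fin m → ℝ) : ℝ :=
  v ⬝ᵥ G.mulVec v

/-- `θ(x) = Σ_i θ_i(x_i)`. -/
def thetaSum {p : ℕ} {n : Fin p → ℕ} (θ : (i : Fin p) → (Fin (n i) → ℝ) → ℝ)
    (x : (i : Fin p) → Fin (n i) → ℝ) : ℝ :=
  ∑ i, θ i (x i)

/-- The Euclidean inner product on `ℝ^{n_1}×⋯×ℝ^{n_p}×ℝ^m`. -/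
def dotW {p m : ℕ} {n : Fin p → ℕ}
    (w w' : ((i : Fin p) → Fin (n i) → ℝ) × (Fin m → ℝ)) : ℝ :=
  (∑ i, w.1 i ⬝ᵥ w'.1 i) + w.2 ⬝ᵥ w'.2

/-- `F(w) = (−A_1ᵀλ, …, −A_pᵀλ, Σ_i A_i x_i − b)`. -/
def Fop {p m : ℕ} {n : Fin p → ℕ} (A : (i : Fin p) → Matrix (Fin m) (Fin (n i)) ℝ)
    (b : Fin m → ℝ) (w : ((i : Fin p) → Fin (n i) → ℝ) × (Fin m → ℝ)) :
    ((i : Fin p) → Fin (n i) → ℝ) × (Fin m → ℝ) :=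
  (fun i => -((A i)ᵀ.mulVec w.2), (∑ i, (A i).mulVec (w.1 i)) - b)

/-- `Pw = (A_1 x_1, …, A_p x_p, λ) ∈ ℝ^{(p+1)m}`. -/
def Pmap {p m : ℕ} {n : Fin p → ℕ} (A : (i : Fin p) → Matrix (Fin m) (Fin (n i)) ℝ)
    (w : ((i : Fin p) → Fin (n i) → ℝ) × (Fin m → ℝ)) :
    (Fin p ⊕ Unit) × Fin m → ℝ :=
  fun q => Sum.elim (fun i => (A i).mulVec (w.1 i) q.2) (fun _ => w.2 q.2) q.1

/-- `Ω = 𝒳_1 × ⋯ × 𝒳_p × ℝ^m`. -/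
def OmegaSet {p : ℕ} (m : ℕ) {n : Fin p → ℕ} (X : (i : Fin p) → Set (Fin (n i) → ℝ)) :
    Set (((i : Fin p) → Fin (n i) → ℝ) × (Fin m → ℝ)) :=
  {w | ∀ i, w.1 i ∈ X i}

/-- The solution set `Ω*` of the variational inequality VI(Ω,F,θ). -/
def VIsol {p m : ℕ} {n : Fin p → ℕ} (θ : (i : Fin p) → (Fin (n i) → ℝ) → ℝ)
    (X : (i : Fin p) → Set (Fin (n i) → ℝ))
    (A : (i : Fin p) → Matrix (Fin m) (Fin (n i)) ℝ) (b : Fin m → ℝ) :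
    Set (((i : Fin p) → Fin (n i) → ℝ) × (Fin m → ℝ)) :=
  {ws | ws ∈ OmegaSet m X ∧ ∀ w ∈ OmegaSet m X,
    thetaSum θ w.1 - thetaSum θ ws.1 + dotW (w - ws) (Fop A b ws) ≥ 0}

/-- The `λ`-component of `ξ = (u_1, …, u_p, λ)`. -/
def lamOf {p m : ℕ} (ξ : (Fin p ⊕ Unit) × Fin m → ℝ) : Fin m → ℝ :=
  fun j => ξ (Sum.inr (), j)

/-- The `u_i`-component of `ξ = (u_1, …, u_p, λ)`. -/
def uOf {p m : ℕ} (ξ : (Fin p ⊕ Unit) × Fin m → ℝ) (i : Fin p) : Fin m → ℝ :=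
  fun j => ξ (Sum.inl i, j)

/-- The parallel splitting ALM step: with input `ξ = (u_1, …, u_p, λ)` it produces
`w̃ = (x̃_1, …, x̃_p, λ̃)` where each `x̃_i ∈ 𝒳_i` minimizes
`x_i ↦ θ_i(x_i) − λᵀ A_i x_i + (β/2)‖A_i x_i − u_i‖²` over `𝒳_i`, and
`λ̃ = λ − β(Σ_i u_i − b)`. -/
def ALMStep {p m : ℕ} {n : Fin p → ℕ} (β : ℝ) (θ : (i : Fin p) → (Fin (n i) → ℝ) → ℝ)
    (X : (i : Fin p) → Set (Fin (n i) → ℝ))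
    (A : (i : Fin p) → Matrix (Fin m) (Fin (n i)) ℝ) (b : Fin m → ℝ)
    (ξ : (Fin p ⊕ Unit) × Fin m → ℝ)
    (wt : ((i : Fin p) → Fin (n i) → ℝ) × (Fin m → ℝ)) : Prop :=
  (∀ i, wt.1 i ∈ X i ∧ ∀ y ∈ X i,
      θ i (wt.1 i) - lamOf ξ ⬝ᵥ (A i).mulVec (wt.1 i) +
          β / 2 * (((A i).mulVec (wt.1 i) - uOf ξ i) ⬝ᵥ ((A i).mulVec (wt.1 i) - uOf ξ i)) ≤
        θ i y - lamOf ξ ⬝ᵥ (A i).mulVec y +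
          β / 2 * (((A i).mulVec y - uOf ξ i) ⬝ᵥ ((A i).mulVec y - uOf ξ i))) ∧
  wt.2 = lamOf ξ - β • ((∑ i, uOf ξ i) - b)


section AuxStmt9

lemma aux9_H0_mul_M0 (p : ℕ) {β : ℝ} (hβ : β ≠ 0) : H0 p β * M0 p β = Q0 p β := by
  have hp1 : ((p:ℝ) + 1) ≠ 0 := by positivity
  have hp2 : (1 + (p:ℝ)) ≠ 0 := by positivity
  ext i j
  cases i <;> cases j <;>
    simp [H0, M0, Q0, Matrix.mul_apply, Fintype.sum_sum_type, Matrix.fromBlocks,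
      Matrix.one_apply, Finset.sum_add_distrib, Finset.sum_sub_distrib, mul_sub, sub_mul,
      mul_add, add_mul, ite_mul, mul_ite, Finset.sum_ite_eq, Finset.sum_ite_eq',
      Finset.card_univ, smul_eq_mul] <;>
    (try split_ifs) <;> first | (subst_vars; simp_all; done) | ring1 | (field_simp <;> ring1)

lemma aux9_M0T_mul_Q0 (p : ℕ) {β : ℝ} (hβ : β ≠ 0) : (M0 p β)ᵀ * Q0 p β = D0 p β := by
  have hp1 : ((p:ℝ) + 1) ≠ 0 := by positivity
  have hp2 : (1 + (p:ℝ)) ≠ 0 := by positivity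
  ext i j
  cases i <;> cases j <;>
    simp [M0, Q0, D0, Matrix.mul_apply, Fintype.sum_sum_type, Matrix.fromBlocks,
      Matrix.one_apply, Finset.sum_add_distrib, Finset.sum_sub_distrib, mul_sub, sub_mul,
      mul_add, add_mul, ite_mul, mul_ite, Finset.sum_ite_eq, Finset.sum_ite_eq',
      Finset.card_univ, smul_eq_mul] <;>
    (try split_ifs) <;> first | (subst_vars; simp_all; done) | ring1 | (field_simp <;> ring1)

lemma aux9_Q0_add_transpose (p : ℕ) (β : ℝ) : Q0 p β + (Q0 p β)ᵀ = (2:ℝ) • D0 p β := by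
  ext i j
  cases i <;> cases j <;>
    simp only [Q0, D0, Matrix.add_apply, Matrix.transpose_apply, Matrix.smul_apply,
      Matrix.fromBlocks, Matrix.of_apply, Sum.elim_inl, Sum.elim_inr, Matrix.one_apply,
      smul_eq_mul, Matrix.smul_apply] <;>
    simp [Matrix.one_apply, mul_ite] <;> (try split_ifs) <;>
      first | (subst_vars; simp_all; done) | ring1

lemma aux9_H0_symm (p : ℕ) (β : ℝ) : (H0 p β)ᵀ = H0 p β := by
  ext i j
  cases i <;> cases j <;>
    simp [H0, Matrix.fromBlocks, Matrix.one_apply, mul_ite] <;>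
      (try split_ifs) <;> first | (subst_vars; simp_all; done) | ring1

lemma aux9_calH_mul_calM (p m : ℕ) {β : ℝ} (hβ : β ≠ 0) :
    calH p m β * calM p m β = calQ p m β := by
  rw [calH, calM, calQ, ← Matrix.mul_kronecker_mul, aux9_H0_mul_M0 p hβ, Matrix.one_mul]

lemma aux9_calM_transpose (p m : ℕ) (β : ℝ) :
    (calM p m β)ᵀ = (M0 p β)ᵀ ⊗ₖ (1 : Matrix (Fin m) (Fin m) ℝ) := by
  rw [calM, ← Matrix.kroneckerMap_transpose, Matrix.transpose_one]

lemma aux9_calMT_mul_calQ (p m : ℕ) {β : ℝ} (hβ : β ≠ 0) :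
    (calM p m β)ᵀ * calQ p m β = calD p m β := by
  rw [aux9_calM_transpose, calQ, calD, ← Matrix.mul_kronecker_mul,
    aux9_M0T_mul_Q0 p hβ, Matrix.one_mul]

lemma aux9_calH_symm (p m : ℕ) (β : ℝ) : (calH p m β)ᵀ = calH p m β := by
  rw [calH, ← Matrix.kroneckerMap_transpose, Matrix.transpose_one, aux9_H0_symm]

lemma aux9_calQ_add_transpose (p m : ℕ) (β : ℝ) :
    calQ p m β + (calQ p m β)ᵀ = (2:ℝ) • calD p m β := by
  rw [calQ, calD, ← Matrix.kroneckerMap_transpose, Matrix.transpose_one,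
    ← Matrix.add_kronecker, aux9_Q0_add_transpose, Matrix.smul_kronecker]

lemma aux9_dot_transpose {n : Type*} [Fintype n] (A : Matrix n n ℝ) (v : n → ℝ) :
    v ⬝ᵥ Aᵀ *ᵥ v = v ⬝ᵥ A *ᵥ v := by
  rw [Matrix.dotProduct_mulVec, Matrix.vecMul_transpose, dotProduct_comm]

lemma aux9_mulVec_dot {n : Type*} [Fintype n] (A B : Matrix n n ℝ) (v w : n → ℝ) :
    (A *ᵥ v) ⬝ᵥ (B *ᵥ w) = v ⬝ᵥ ((Aᵀ * B) *ᵥ w) := by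
  rw [← Matrix.vecMul_transpose, ← Matrix.dotProduct_mulVec, Matrix.mulVec_mulVec]

lemma aux9_calQ_quad (p m : ℕ) (β : ℝ) (v : (Fin p ⊕ Unit) × Fin m → ℝ) :
    v ⬝ᵥ calQ p m β *ᵥ v = v ⬝ᵥ calD p m β *ᵥ v := by
  have h := congrArg (fun A => v ⬝ᵥ A *ᵥ v) (aux9_calQ_add_transpose p m β)
  simp only [Matrix.add_mulVec, dotProduct_add, aux9_dot_transpose,
    Matrix.smul_mulVec, dotProduct_smul, smul_eq_mul] at h
  linarith

end AuxStmt9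

/-- If `ξ^{k+1} = ξ^k − αℳ(ξ^k − ξ̃^k)`, then
`(1/2)(‖ξ^k − ξ̃^k‖²_ℋ − ‖ξ^{k+1} − ξ̃^k‖²_ℋ) = (α(2 − α)/2)‖ξ^k − ξ̃^k‖²_𝒟`. -/
theorem stmt9 {p m : ℕ} (hp : 1 ≤ p) (hm : 1 ≤ m) {β : ℝ} (hβ : 0 < β) (α : ℝ)
    (ξk ξt ξk1 : (Fin p ⊕ Unit) × Fin m → ℝ)
    (hrel : ξk1 = ξk - α • (calM p m β).mulVec (ξk - ξt)) :
    1 / 2 * (nsq (calH p m β) (ξk - ξt) - nsq (calH p m β) (ξk1 - ξt)) =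
      α * (2 - α) / 2 * nsq (calD p m β) (ξk - ξt) := by
  have hβ' : β ≠ 0 := ne_of_gt hβ
  set v : (Fin p ⊕ Unit) × Fin m → ℝ := ξk - ξt with hv
  set M := calM p m β with hM
  set H := calH p m β with hH
  have hw : ξk1 - ξt = v - α • (M *ᵥ v) := by
    funext q
    simp only [hrel, hv, Pi.sub_apply, Pi.smul_apply, smul_eq_mul]
    ring
  have hb : v ⬝ᵥ H *ᵥ (M *ᵥ v) = v ⬝ᵥ calD p m β *ᵥ v := by
    rw [Matrix.mulVec_mulVec, hH, hM, aux9_calH_mul_calM p m hβ', aux9_calQ_quad]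
  have hc : (M *ᵥ v) ⬝ᵥ (H *ᵥ v) = v ⬝ᵥ calD p m β *ᵥ v := by
    rw [aux9_mulVec_dot]
    have : Mᵀ * H = (calQ p m β)ᵀ := by
      rw [hM, hH, ← aux9_calH_symm p m β, ← Matrix.transpose_mul,
        aux9_calH_mul_calM p m hβ']
    rw [this, aux9_dot_transpose, aux9_calQ_quad]
  have hd : (M *ᵥ v) ⬝ᵥ (H *ᵥ (M *ᵥ v)) = v ⬝ᵥ calD p m β *ᵥ v := by
    rw [aux9_mulVec_dot, Matrix.mulVec_mulVec, hM, hH, Matrix.mul_assoc,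
      aux9_calH_mul_calM p m hβ', aux9_calMT_mul_calQ p m hβ']
  unfold nsq
  rw [hw]
  simp only [Matrix.mulVec_sub, Matrix.mulVec_smul, sub_dotProduct, dotProduct_sub,
    dotProduct_smul, smul_dotProduct, smul_eq_mul]
  rw [hb] at *
  rw [hc, hd]
  ring
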